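/- Define activation functions ζ_min(ρ) = (1/2)(1 - tanh((c_op - c_min)/ρ)), ζ_op(ρ) = (1/2)(1 - tanh((c_min - c_op)/ρ))·(1/2)(1 - tanh((c_op - c_max)/ρ)), and ζ_max(ρ) = (1/2)(1 - tanh((c_max - c_op)/ρ)). Then for fixed c_op with c_op ∉ {c_min, c_max} and c_min < c_max, the composite control c(ρ) = ζ_min(ρ)·c_min + ζ_op(ρ)·c_op + ζ_max(ρ)·c_max converges as ρ → 0⁺ to max(c_min, min(c_op, c_max)). -/
import Mathlib

open Real Filter Topology

lemma tanh_eq_aux (x : ℝ) :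
    Real.tanh x = (1 - Real.exp (-2 * x)) / (1 + Real.exp (-2 * x)) := by
  have hx : Real.exp x ≠ 0 := (Real.exp_pos x).ne'
  have hd : (1 : ℝ) + Real.exp (-2 * x) ≠ 0 := by positivity
  rw [Real.tanh_eq_sinh_div_cosh, Real.sinh_eq, Real.cosh_eq,
    show (-2:ℝ) * x = -x + -x by ring, Real.exp_add]
  rw [Real.exp_neg] at *
  field_simp

lemma tanh_atTop : Tendsto Real.tanh atTop (𝓝 1) := by
  have h1 : Tendsto (fun x : ℝ => Real.exp (-2 * x)) atTop (𝓝 0) := by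
    exact Real.tendsto_exp_atBot.comp
      (tendsto_id.const_mul_atTop_of_neg (by norm_num : (-2:ℝ) < 0))
  have : Tendsto (fun x : ℝ => (1 - Real.exp (-2 * x)) / (1 + Real.exp (-2 * x)))
      atTop (𝓝 ((1 - 0) / (1 + 0))) :=
    Tendsto.div ((tendsto_const_nhds).sub h1) ((tendsto_const_nhds).add h1) (by norm_num)
  rw [show Real.tanh = fun x => Real.tanh x from rfl]
  simp only [tanh_eq_aux]
  simpa using this

lemma tanh_atBot : Tendsto Real.tanh atBot (𝓝 (-1)) := by
  have := (tanh_atTop.comp tendsto_neg_atBot_atTop).neg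
  simp only [Function.comp] at this
  simpa [Real.tanh_neg] using this

/-- half factor limit -/
lemma half_factor (a : ℝ) (ha : a ≠ 0) :
    Tendsto (fun ρ : ℝ => (1 / 2 : ℝ) * (1 - Real.tanh (a / ρ)))
      (𝓝[>] (0:ℝ)) (𝓝 (if 0 < a then 0 else 1)) := by
  rcases lt_or_gt_of_ne ha with hneg | hpos
  · have hdiv : Tendsto (fun ρ : ℝ => a / ρ) (𝓝[>] (0:ℝ)) atBot := by
      simp only [div_eq_mul_inv]
      exact Filter.Tendsto.const_mul_atTop_of_neg hneg tendsto_inv_nhdsGT_zero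
    have := (tanh_atBot.comp hdiv)
    have h2 : Tendsto (fun ρ : ℝ => (1/2 : ℝ) * (1 - Real.tanh (a / ρ)))
        (𝓝[>] (0:ℝ)) (𝓝 ((1/2) * (1 - (-1)))) :=
      (tendsto_const_nhds.sub this).const_mul _
    simp only [if_neg (not_lt.mpr hneg.le)]
    convert h2 using 2; norm_num
  · have hdiv : Tendsto (fun ρ : ℝ => a / ρ) (𝓝[>] (0:ℝ)) atTop := by
      simp only [div_eq_mul_inv]
      exact Filter.Tendsto.const_mul_atTop hpos tendsto_inv_nhdsGT_zero
    have := (tanh_atTop.comp hdiv)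
    have h2 : Tendsto (fun ρ : ℝ => (1/2 : ℝ) * (1 - Real.tanh (a / ρ)))
        (𝓝[>] (0:ℝ)) (𝓝 ((1/2) * (1 - 1))) :=
      (tendsto_const_nhds.sub this).const_mul _
    simp only [if_pos hpos]
    convert h2 using 2; norm_num

/-- The composite smooth control c(ρ) = ζ_min·c_min + ζ_op·c_op + ζ_max·c_max
converges, as ρ → 0⁺, to the clipped value max(c_min, min(c_op, c_max)),
for c_op ∉ {c_min, c_max}. -/
theorem composite_smooth_control_limit (cmin cmax cop : ℝ) (h : cmin < cmax)
    (h1 : cop ≠ cmin) (h2 : cop ≠ cmax) :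
    Filter.Tendsto (fun ρ : ℝ =>
        ((1 / 2) * (1 - Real.tanh ((cop - cmin) / ρ))) * cmin +
        (((1 / 2) * (1 - Real.tanh ((cmin - cop) / ρ))) *
         ((1 / 2) * (1 - Real.tanh ((cop - cmax) / ρ)))) * cop +
        ((1 / 2) * (1 - Real.tanh ((cmax - cop) / ρ))) * cmax)
      (nhdsWithin 0 (Set.Ioi 0)) (nhds (max cmin (min cop cmax))) := by
  have ha : cop - cmin ≠ 0 := sub_ne_zero.mpr h1
  have hb : cmin - cop ≠ 0 := sub_ne_zero.mpr h1.symm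
  have hc : cop - cmax ≠ 0 := sub_ne_zero.mpr h2
  have hd : cmax - cop ≠ 0 := sub_ne_zero.mpr h2.symm
  have T := ((((half_factor _ ha).mul_const cmin).add
      ((((half_factor _ hb).mul (half_factor _ hc))).mul_const cop)).add
      ((half_factor _ hd).mul_const cmax))
  convert T using 2
  rcases lt_or_gt_of_ne h1 with hlt | hgt
  · -- cop < cmin
    rw [if_neg (by linarith), if_pos (by linarith), if_neg (by linarith),
        if_pos (by linarith)]
    rw [max_eq_left (by simp [min_le_iff]; left; linarith)]
    ring
  · rcases lt_or_gt_of_ne h2 with hlt2 | hgt2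
    · -- cmin < cop < cmax
      rw [if_pos (by linarith), if_neg (by linarith), if_neg (by linarith),
          if_pos (by linarith)]
      rw [min_eq_left hlt2.le, max_eq_right (by linarith)]
      ring
    · -- cop > cmax
      rw [if_pos (by linarith), if_neg (by linarith), if_pos (by linarith),
          if_neg (by linarith)]
      rw [min_eq_right (by linarith), max_eq_right h.le]
      ring
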